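/- Let n = 3k+1 with k ≥ 1 a natural number. Then the minimum number of coins in a downhill weighing that is balanced or a tight imbalance equals (5n²−n−4)/18; that is: (a) every downhill weighing a : {1,…,n} → ℤ (a(1) > … > a(n)) with Σ_{i=1}^n i·a(i) ∈ {0, −1} satisfies Σ_{i=1}^n |a(i)| ≥ (5n²−n−4)/18, and (b) there exists a downhill weighing a with Σ_{i=1}^n i·a(i) = 0 and Σ_{i=1}^n |a(i)| = (5n²−n−4)/18. -/

import Mathlib

/-!
The extremal weighing is the arithmetic progression `a* i = 2k+1-i`: it balances, and
`18 * ∑ |a* i| = 5n² - n - 4`. For the lower bound, write `D = n(n+1)` and pair `a` with the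
weights `w i = D * sign (2k+1-i) - 2k * i`. Their partial sums `N j` are nonnegative and vanish
at `j = 0` and `j = n`, so summation by parts against the nonincreasing sequence `a - a*` gives
`∑ w i * a i ≥ ∑ w i * a* i`, hence `D * ∑ |a i| - 2k * S(a) ≥ D * ∑ |a* i|`.
With `S(a) ≥ -1` this yields `D * ∑ |a i| ≥ D * ∑ |a* i| - 2k`, and `2k < D` forces
`∑ |a i| ≥ ∑ |a* i|`.
-/

open Finset

lemma Int.sign_mul_le_abs (x y : ℤ) : y.sign * x ≤ |x| := by
  rcases Int.sign_trichotomy y with h | h | h <;> simp [h, le_abs_self, neg_le_abs]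

lemma sum_Icc_sub_mul_nonneg {N e : ℕ → ℤ} {n : ℕ} (h0 : N 0 = 0) (hn : N n = 0)
    (hN : ∀ j ≤ n, 0 ≤ N j) (he : ∀ i ∈ Ico 1 n, e (i + 1) ≤ e i) :
    0 ≤ ∑ i ∈ Icc 1 n, (N i - N (i - 1)) * e i := by
  suffices h : ∀ m ≤ n, N m * e m ≤ ∑ i ∈ Icc 1 m, (N i - N (i - 1)) * e i by
    simpa [hn] using h n le_rfl
  intro m hm
  induction m with
  | zero => simp [h0]
  | succ m ih =>
    rw [sum_Icc_succ_top (by omega), Nat.add_sub_cancel]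
    have hstep : 0 ≤ N m * (e m - e (m + 1)) := by
      rcases Nat.eq_zero_or_pos m with rfl | hm0
      · simp [h0]
      · exact mul_nonneg (hN m (by omega)) (sub_nonneg.2 (he m (by simp; omega)))
    linarith [ih (by omega)]

lemma six_mul_sum_Icc_mul_sub (c : ℤ) (m : ℕ) :
    6 * ∑ i ∈ Icc 1 m, (i : ℤ) * (c - i) = m * (m + 1) * (3 * c - 2 * m - 1) := by
  induction m with
  | zero => simp
  | succ m ih =>
    rw [sum_Icc_succ_top (by omega), mul_add, ih]
    push_cast
    ring

lemma two_mul_sum_Icc_abs_sub_self (c : ℕ) :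
    2 * ∑ i ∈ Icc 1 c, |(c : ℤ) - i| = c * (c - 1) := by
  induction c with
  | zero => simp
  | succ c ih =>
    have hshift : ∀ i ∈ Icc 1 c, |((c + 1 : ℕ) : ℤ) - i| = |(c : ℤ) - i| + 1 := by
      intro i hi
      have : (i : ℤ) ≤ c := by exact_mod_cast (mem_Icc.1 hi).2
      rw [abs_of_nonneg (by push_cast; linarith), abs_of_nonneg (by linarith)]
      push_cast
      ring
    rw [sum_Icc_succ_top (by omega), sum_congr rfl hshift, sum_add_distrib]
    simp only [sum_const, Nat.card_Icc, sub_self, abs_zero]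
    push_cast
    linear_combination ih

lemma two_mul_sum_Icc_abs_sub {c m : ℕ} (h : c ≤ m) :
    2 * ∑ i ∈ Icc 1 m, |(c : ℤ) - i| = c * (c - 1) + (m - c) * (m - c + 1) := by
  induction m, h using Nat.le_induction with
  | base => simp [two_mul_sum_Icc_abs_sub_self]
  | succ m hcm ih =>
    have : (c : ℤ) ≤ m := by exact_mod_cast hcm
    rw [sum_Icc_succ_top (by omega), mul_add, ih, abs_of_nonpos (by push_cast; linarith)]
    push_cast
    ring

namespace CoinWeighing

variable (k : ℕ)

-- The partial sums of the weights `D * sign (2k+1-i) - 2k * i` with `D = (3k+1)(3k+2)`.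
def certificate (j : ℕ) : ℤ :=
  (3 * k + 1) * (3 * k + 2) * min (j : ℤ) (4 * k + 1 - j) - k * j * (j + 1)

lemma certificate_zero : certificate k 0 = 0 := by
  rw [certificate, min_eq_left (by omega)]
  simp

lemma certificate_last : certificate k (3 * k + 1) = 0 := by
  rw [certificate, min_eq_right (by push_cast; omega)]
  push_cast
  ring

lemma certificate_nonneg {j : ℕ} (hj : j ≤ 3 * k + 1) : 0 ≤ certificate k j := by
  have hj' : (j : ℤ) ≤ 3 * k + 1 := by exact_mod_cast hj
  rcases le_or_gt j (2 * k) with h | h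
  · have h' : (j : ℤ) ≤ 2 * k := by exact_mod_cast h
    rw [certificate, min_eq_left (by omega)]
    nlinarith [mul_nonneg (Nat.cast_nonneg (α := ℤ) j) (Nat.cast_nonneg (α := ℤ) k)]
  · have h' : 2 * (k : ℤ) < j := by exact_mod_cast h
    rw [certificate, min_eq_right (by omega)]
    have hfactor : (3 * k + 1 : ℤ) * (3 * k + 2) * (4 * k + 1 - j) - k * j * (j + 1)
        = (3 * k + 1 - j) * ((3 * k + 1) * (3 * k + 2) + k * (3 * k + 2 + j)) := by ring
    rw [hfactor]
    exact mul_nonneg (by linarith) (by positivity)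

lemma certificate_sub_pred {j : ℕ} (hj : 1 ≤ j) :
    certificate k j - certificate k (j - 1)
      = (3 * k + 1) * (3 * k + 2) * (2 * k + 1 - j : ℤ).sign - 2 * k * j := by
  have hcast : ((j - 1 : ℕ) : ℤ) = j - 1 := by omega
  simp only [certificate, hcast]
  rcases lt_trichotomy j (2 * k + 1) with h | rfl | h
  · rw [min_eq_left (by omega), min_eq_left (by omega), Int.sign_eq_one_of_pos (by omega)]
    ring
  · rw [min_eq_right (by push_cast; omega), min_eq_left (by push_cast; omega)]
    push_cast
    rw [show (2 * k + 1 - (2 * k + 1) : ℤ) = 0 by ring, Int.sign_zero]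
    ring
  · rw [min_eq_right (by omega), min_eq_right (by omega), Int.sign_eq_neg_one_of_neg (by omega)]
    ring

lemma sum_Icc_mul_progression : ∑ i ∈ Icc 1 (3 * k + 1), (i : ℤ) * (2 * k + 1 - i) = 0 := by
  have h := six_mul_sum_Icc_mul_sub (2 * k + 1) (3 * k + 1)
  push_cast at h
  linarith

lemma eighteen_mul_sum_Icc_abs_progression :
    18 * ∑ i ∈ Icc 1 (3 * k + 1), |(2 * k + 1 : ℤ) - i|
      = 5 * ((3 * k + 1 : ℕ) : ℤ) ^ 2 - (3 * k + 1 : ℕ) - 4 := by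
  have h := two_mul_sum_Icc_abs_sub (c := 2 * k + 1) (m := 3 * k + 1) (by omega)
  push_cast [show 3 * k + 1 - (2 * k + 1) = k by omega] at h ⊢
  linear_combination 9 * h

lemma sum_abs_progression_le_sum_abs {a : ℕ → ℤ}
    (ha : ∀ i j : ℕ, 1 ≤ i → i < j → j ≤ 3 * k + 1 → a j < a i)
    (hS : -1 ≤ ∑ i ∈ Icc 1 (3 * k + 1), (i : ℤ) * a i) :
    ∑ i ∈ Icc 1 (3 * k + 1), |(2 * k + 1 : ℤ) - i|
      ≤ ∑ i ∈ Icc 1 (3 * k + 1), |a i| := by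
  set D : ℤ := (3 * k + 1) * (3 * k + 2)
  have hD2k : 2 * (k : ℤ) < D := by nlinarith
  have hdiff : ∀ i ∈ Ico 1 (3 * k + 1),
      a (i + 1) - (2 * k + 1 - (i + 1 : ℕ)) ≤ a i - (2 * k + 1 - i) := by
    intro i hi
    have := ha i (i + 1) (mem_Ico.1 hi).1 (by omega) (by have := (mem_Ico.1 hi).2; omega)
    push_cast
    linarith
  have hparts := sum_Icc_sub_mul_nonneg (certificate_zero k) (certificate_last k)
    (fun j hj => certificate_nonneg k hj) hdiff
  have hpt : ∀ i ∈ Icc 1 (3 * k + 1),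
      (certificate k i - certificate k (i - 1)) * (a i - (2 * k + 1 - i))
        ≤ D * |a i| - D * |(2 * k + 1 : ℤ) - i| - 2 * k * (i * a i)
          + 2 * k * (i * (2 * k + 1 - i)) := by
    intro i hi
    rw [certificate_sub_pred k (mem_Icc.1 hi).1, ← Int.sign_mul_self_eq_abs (2 * k + 1 - i)]
    have := mul_le_mul_of_nonneg_left (Int.sign_mul_le_abs (a i) (2 * k + 1 - i))
      (by positivity : 0 ≤ D)
    linarith
  have hsum := hparts.trans (sum_le_sum hpt)
  simp only [sum_add_distrib, sum_sub_distrib, ← mul_sum, sum_Icc_mul_progression] at hsum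
  have hbound : D * ∑ i ∈ Icc 1 (3 * k + 1), |(2 * k + 1 : ℤ) - i|
      ≤ D * ∑ i ∈ Icc 1 (3 * k + 1), |a i| + 2 * k := by
    nlinarith
  by_contra! hlt
  nlinarith

end CoinWeighing

theorem min_coins_three_k_plus_one_general (k n : ℕ) (hn : n = 3 * k + 1) :
    (∀ a : ℕ → ℤ, (∀ i j : ℕ, 1 ≤ i → i < j → j ≤ n → a j < a i) →
      (∑ i ∈ Finset.Icc 1 n, (i : ℤ) * a i = 0 ∨
        ∑ i ∈ Finset.Icc 1 n, (i : ℤ) * a i = -1) →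
      5 * (n : ℤ) ^ 2 - (n : ℤ) - 4 ≤ 18 * ∑ i ∈ Finset.Icc 1 n, |a i|) ∧
    (∃ a : ℕ → ℤ, (∀ i j : ℕ, 1 ≤ i → i < j → j ≤ n → a j < a i) ∧
      ∑ i ∈ Finset.Icc 1 n, (i : ℤ) * a i = 0 ∧
      18 * ∑ i ∈ Finset.Icc 1 n, |a i| = 5 * (n : ℤ) ^ 2 - (n : ℤ) - 4) := by
  subst hn
  refine ⟨fun a ha hS => ?_, fun i => 2 * k + 1 - i, ?_, CoinWeighing.sum_Icc_mul_progression k,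
    CoinWeighing.eighteen_mul_sum_Icc_abs_progression k⟩
  · have hS' : -1 ≤ ∑ i ∈ Icc 1 (3 * k + 1), (i : ℤ) * a i := by omega
    have := CoinWeighing.sum_abs_progression_le_sum_abs k ha hS'
    linarith [CoinWeighing.eighteen_mul_sum_Icc_abs_progression k]
  · intro i j _ hij _
    push_cast
    omega

/-- For `n = 3k+1`, the minimum number of coins in a downhill weighing that is
a balance or a tight imbalance equals `(5n²−n−4)/18`. (Stated with both sides
multiplied by 18.) -/
theorem min_coins_three_k_plus_one (k n : ℕ) (hk : 1 ≤ k) (hn : n = 3 * k + 1) :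
    (∀ a : ℕ → ℤ, (∀ i j : ℕ, 1 ≤ i → i < j → j ≤ n → a j < a i) →
      (∑ i ∈ Finset.Icc 1 n, (i : ℤ) * a i = 0 ∨
        ∑ i ∈ Finset.Icc 1 n, (i : ℤ) * a i = -1) →
      5 * (n : ℤ) ^ 2 - (n : ℤ) - 4 ≤ 18 * ∑ i ∈ Finset.Icc 1 n, |a i|) ∧
    (∃ a : ℕ → ℤ, (∀ i j : ℕ, 1 ≤ i → i < j → j ≤ n → a j < a i) ∧
      ∑ i ∈ Finset.Icc 1 n, (i : ℤ) * a i = 0 ∧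
      18 * ∑ i ∈ Finset.Icc 1 n, |a i| = 5 * (n : ℤ) ^ 2 - (n : ℤ) - 4) :=
  min_coins_three_k_plus_one_general k n hn
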